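/- A decorated swamp (E, L, φ, s) is asymptotically δ₂-(semi-)stable if and only if for every weighted flag (E_•, α) of E the following two conditions hold: (1) μ₁(E_•, α, φ) ≥ 0, and (2) if μ₁(E_•, α, φ) = 0, then M(E_•, α) + δ₂ μ₂(E_•, α, s) (≥) 0. -/
import Mathlib

private lemma aux_le (A μ : ℚ) :
    (∃ c : ℚ, 0 < c ∧ ∀ δ : ℚ, c ≤ δ → 0 ≤ A + δ * μ) ↔
      (0 ≤ μ ∧ (μ = 0 → 0 ≤ A)) := by
  constructor
  · rintro ⟨c, hc, h⟩
    constructor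
    · by_contra hμ
      push_neg at hμ
      set d := max c ((A + 1) / (-μ)) with hd
      have hδ := h d (le_max_left _ _)
      have h2 : (A + 1) / (-μ) ≤ d := le_max_right _ _
      have hne : μ ≠ 0 := hμ.ne
      have h4 : (A + 1) / (-μ) * μ = -(A + 1) := by rw [div_mul_eq_mul_div, div_eq_iff (neg_ne_zero.mpr hne)]; ring
      nlinarith
    · intro h0
      have := h c le_rfl
      simpa [h0] using this
  · rintro ⟨hμ, h0⟩
    rcases eq_or_lt_of_le hμ with heq | hlt
    · exact ⟨1, one_pos, fun δ _ => by simpa [← heq] using h0 heq.symm⟩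
    · refine ⟨max 1 ((1 - A) / μ), lt_of_lt_of_le one_pos (le_max_left _ _), fun δ hδ => ?_⟩
      have h2 : (1 - A) / μ ≤ δ := le_trans (le_max_right _ _) hδ
      have h4 : (1 - A) / μ * μ = 1 - A := by field_simp
      nlinarith

private lemma aux_lt (A μ : ℚ) :
    (∃ c : ℚ, 0 < c ∧ ∀ δ : ℚ, c ≤ δ → 0 < A + δ * μ) ↔
      (0 ≤ μ ∧ (μ = 0 → 0 < A)) := by
  constructor
  · rintro ⟨c, hc, h⟩
    constructor
    · by_contra hμ
      push_neg at hμ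
      set d := max c ((A + 1) / (-μ)) with hd
      have hδ := h d (le_max_left _ _)
      have h2 : (A + 1) / (-μ) ≤ d := le_max_right _ _
      have hne : μ ≠ 0 := hμ.ne
      have h4 : (A + 1) / (-μ) * μ = -(A + 1) := by rw [div_mul_eq_mul_div, div_eq_iff (neg_ne_zero.mpr hne)]; ring
      nlinarith
    · intro h0
      have := h c le_rfl
      simpa [h0] using this
  · rintro ⟨hμ, h0⟩
    rcases eq_or_lt_of_le hμ with heq | hlt
    · exact ⟨1, one_pos, fun δ _ => by simpa [← heq] using h0 heq.symm⟩
    · refine ⟨max 1 ((1 - A) / μ), lt_of_lt_of_le one_pos (le_max_left _ _), fun δ hδ => ?_⟩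
      have h2 : (1 - A) / μ ≤ δ := le_trans (le_max_right _ _) hδ
      have h4 : (1 - A) / μ * μ = 1 - A := by field_simp
      nlinarith

/-- A decorated swamp (E,L,φ,s) is asymptotically δ₂-(semi-)stable iff for
every weighted flag (E_•,α) of E one has μ₁ ≥ 0 and (μ₁ = 0 → M + δ₂μ₂ (≥) 0).
Here `F` is the set of weighted flags of E, and `M f`, `μ₁ f`, `μ₂ f` are the rational
quantities M(E_•,α), μ₁(E_•,α,φ), μ₂(E_•,α,s) attached to the flag f. -/
theorem stmt_6 {F : Type*} (M μ₁ μ₂ : F → ℚ) (δ₂ : ℚ) (hδ₂ : 0 < δ₂) :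
    ((∀ f : F, ∃ c₁ : ℚ, 0 < c₁ ∧ ∀ δ₁ : ℚ, c₁ ≤ δ₁ → 0 ≤ M f + δ₁ * μ₁ f + δ₂ * μ₂ f) ↔
      ∀ f : F, 0 ≤ μ₁ f ∧ (μ₁ f = 0 → 0 ≤ M f + δ₂ * μ₂ f)) ∧
    ((∀ f : F, ∃ c₁ : ℚ, 0 < c₁ ∧ ∀ δ₁ : ℚ, c₁ ≤ δ₁ → 0 < M f + δ₁ * μ₁ f + δ₂ * μ₂ f) ↔
      ∀ f : F, 0 ≤ μ₁ f ∧ (μ₁ f = 0 → 0 < M f + δ₂ * μ₂ f)) := by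
  constructor
  · apply forall_congr'
    intro f
    have := aux_le (M f + δ₂ * μ₂ f) (μ₁ f)
    convert this using 3 with c
    constructor <;> rintro ⟨hc, h⟩ <;> exact ⟨hc, fun δ hδ => by have := h δ hδ; linarith⟩
  · apply forall_congr'
    intro f
    have := aux_lt (M f + δ₂ * μ₂ f) (μ₁ f)
    convert this using 3 with c
    constructor <;> rintro ⟨hc, h⟩ <;> exact ⟨hc, fun δ hδ => by have := h δ hδ; linarith⟩
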